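/- Let n, k ≥ 1 be integers, let A ∈ ℤ^{m×n} with rows a₁, …, a_m and α = max_{i,j}|A_{ij}| ≥ 1, let b ∈ ℤ^m, let E ⊆ {1,…,m}, and let F = {x ∈ ℝⁿ ∣ aᵢᵀx = bᵢ for i ∈ E, aᵢᵀx ≤ bᵢ for i ∉ E}. Assume F ⊆ [0,k]ⁿ, F is nonempty, and F = conv(F ∩ ℤⁿ). Let c̄ ∈ ℝⁿ be nonzero with aᵢᵀc̄ = 0 for every i ∈ E, let ĉ = (n³kα/‖c̄‖_∞)·c̄, and let c̃ ∈ ℤⁿ be given componentwise by c̃_j = ⌊ĉ_j⌋. Suppose x̃ ∈ F maximizes c̃ᵀx over F, and ỹ ∈ ℝ^m satisfies Aᵀỹ = c̃, ỹᵢ ≥ 0 for i ∉ E, and bᵀỹ = c̃ᵀx̃. Then every x̂ ∈ F that maximizes c̄ᵀx over F satisfies aᵢᵀx̂ = bᵢ for every index i with ỹᵢ > n·k. -/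

import Mathlib

/-!
Because `Aᵀỹ = c̃` and `bᵀỹ = c̃ᵀx̃`, for every `x ∈ F` the sum `∑ᵢ ỹᵢ (bᵢ - aᵢᵀx)` of nonnegative
terms equals `c̃ᵀ(x̃ - x)`. If `x` is a lattice point of `F` maximizing `c̄`, then `ĉᵀ(x̃ - x) ≤ 0`,
and rounding `ĉ` down to `c̃` costs at most `n·k` on the box `[0,k]ⁿ`; so `ỹᵢ (bᵢ - aᵢᵀx) ≤ n·k`,
and when `ỹᵢ > n·k` the integral slack `bᵢ - aᵢᵀx` vanishes. Finally `x̂` is a convex combination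
of lattice points of `F`, all of which maximize `c̄` since `x̂` does, so `aᵢᵀx̂ = bᵢ` too.
-/

open Matrix

section

variable {𝕜 ι m : Type*} [Field 𝕜] [LinearOrder 𝕜] [IsStrictOrderedRing 𝕜] [Fintype ι]

def polyhedronFace (A : Matrix m ι 𝕜) (b : m → 𝕜) (E : Set m) : Set (ι → 𝕜) :=
  {x | (∀ i ∈ E, (A *ᵥ x) i = b i) ∧ ∀ i ∉ E, (A *ᵥ x) i ≤ b i}

theorem mul_slack_le_dual_gap [Fintype m] {A : Matrix m ι 𝕜} {b y : m → 𝕜} {c : ι → 𝕜}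
    {E : Set m} (hdual : Aᵀ *ᵥ y = c) (hy : ∀ i ∉ E, 0 ≤ y i) {x : ι → 𝕜}
    (hx : x ∈ polyhedronFace A b E) (i : m) :
    y i * (b i - (A *ᵥ x) i) ≤ b ⬝ᵥ y - c ⬝ᵥ x := by
  obtain ⟨hxE, hxle⟩ := hx
  have hgap : b ⬝ᵥ y - c ⬝ᵥ x = ∑ i, y i * (b i - (A *ᵥ x) i) := by
    rw [← hdual, mulVec_transpose, ← dotProduct_mulVec, dotProduct_comm b, ← dotProduct_sub]
    rfl
  rw [hgap]
  refine Finset.single_le_sum (f := fun i => y i * (b i - (A *ᵥ x) i)) (fun i' _ => ?_)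
    (Finset.mem_univ i)
  by_cases hi' : i' ∈ E
  · rw [hxE i' hi', sub_self, mul_zero]
  · exact mul_nonneg (hy i' hi') (sub_nonneg.2 (hxle i' hi'))

theorem intCast_mulVec_apply_eq_of_mul_slack_le {A : Matrix m ι ℤ} {b : m → ℤ} {E : Set m}
    {z : ι → ℤ} (hz : Int.cast ∘ z ∈ polyhedronFace (A.map Int.cast) (Int.cast ∘ b : m → 𝕜) E)
    {y : m → 𝕜} (hy : ∀ i ∉ E, 0 ≤ y i) {i : m} {N : 𝕜}
    (hslack : y i * (b i - (A.map Int.cast *ᵥ Int.cast ∘ z) i) ≤ N) (hN : N < y i) :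
    (A.map Int.cast *ᵥ Int.cast ∘ z) i = (b i : 𝕜) := by
  obtain ⟨hzE, hzle⟩ := hz
  by_cases hi : i ∈ E
  · exact hzE i hi
  have hcast : (A.map Int.cast *ᵥ Int.cast ∘ z) i = (((A *ᵥ z) i : ℤ) : 𝕜) :=
    (RingHom.map_mulVec (Int.castRingHom 𝕜) A z i).symm
  have hle := hzle i hi
  rw [hcast] at hslack hle ⊢
  have hslack_nonneg : 0 ≤ b i - (A *ᵥ z) i := sub_nonneg.2 (Int.cast_le.1 hle)
  have hslack_lt_one : b i - (A *ᵥ z) i < 1 := by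
    by_contra! hone
    have : y i ≤ y i * ((b i - (A *ᵥ z) i : ℤ) : 𝕜) :=
      le_mul_of_one_le_right (hy i hi) (by exact_mod_cast hone)
    push_cast at this
    linarith
  exact_mod_cast (show (A *ᵥ z) i = b i by omega)

theorem dotProduct_eq_of_mem_convexHull {s : Set (ι → 𝕜)} {c a x : ι → 𝕜} {β : 𝕜}
    (hx : x ∈ convexHull 𝕜 s) (hmax : ∀ z ∈ s, c ⬝ᵥ z ≤ c ⬝ᵥ x)
    (hface : ∀ z ∈ s, c ⬝ᵥ x ≤ c ⬝ᵥ z → a ⬝ᵥ z = β) : a ⬝ᵥ x = β := by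
  set M := c ⬝ᵥ x
  let C : Set (ι → 𝕜) := {z | c ⬝ᵥ z ≤ M ∧ (M ≤ c ⬝ᵥ z → a ⬝ᵥ z = β)}
  have hC : Convex 𝕜 C := by
    rintro u ⟨hu, hua⟩ w ⟨hw, hwa⟩ p q hp hq hpq
    have hcomb : ∀ v : ι → 𝕜, v ⬝ᵥ (p • u + q • w) = p * v ⬝ᵥ u + q * v ⬝ᵥ w := fun v => by
      simp only [dotProduct_add, dotProduct_smul, smul_eq_mul]
    have hpu : 0 ≤ p * (M - c ⬝ᵥ u) := mul_nonneg hp (sub_nonneg.2 hu)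
    have hqw : 0 ≤ q * (M - c ⬝ᵥ w) := mul_nonneg hq (sub_nonneg.2 hw)
    have hM : M = p * M + q * M := by rw [← add_mul, hpq, one_mul]
    refine ⟨by rw [hcomb]; linarith, fun hle => ?_⟩
    rw [hcomb] at hle ⊢
    -- a vertex carrying positive weight must itself attain the maximum `M`
    have tight : ∀ r v, r * (M - c ⬝ᵥ v) = 0 → (M ≤ c ⬝ᵥ v → a ⬝ᵥ v = β) →
        r * a ⬝ᵥ v = r * β := by
      intro r v h hva
      rcases mul_eq_zero.1 h with hr | hv
      · rw [hr, zero_mul, zero_mul]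
      · rw [hva (sub_eq_zero.1 hv).le]
    rw [tight p u (by linarith) hua, tight q w (by linarith) hwa, ← add_mul, hpq, one_mul]
  exact (convexHull_min (show s ⊆ C from fun z hz => ⟨hmax z hz, hface z hz⟩) hC hx).2 le_rfl

variable [FloorRing 𝕜]

theorem floor_dotProduct_le (h d : ι → 𝕜) {k : 𝕜} (hd : ∀ j, |d j| ≤ k) :
    (fun j => (⌊h j⌋ : 𝕜)) ⬝ᵥ d ≤ h ⬝ᵥ d + Fintype.card ι * k := by
  have hterm : ∀ j, (⌊h j⌋ : 𝕜) * d j ≤ h j * d j + k := fun j => by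
    have hfract : -(Int.fract (h j) * d j) ≤ k :=
      calc -(Int.fract (h j) * d j) ≤ Int.fract (h j) * |d j| := by
            rw [← mul_neg]; exact mul_le_mul_of_nonneg_left (neg_le_abs _) (Int.fract_nonneg _)
        _ ≤ |d j| := mul_le_of_le_one_left (abs_nonneg _) (Int.fract_lt_one _).le
        _ ≤ k := hd j
    calc (⌊h j⌋ : 𝕜) * d j = h j * d j - Int.fract (h j) * d j := by
          rw [← Int.self_sub_floor]; ring
      _ ≤ h j * d j + k := by linarith
  calc (fun j => (⌊h j⌋ : 𝕜)) ⬝ᵥ d ≤ ∑ j, (h j * d j + k) := Finset.sum_le_sum fun j _ => hterm j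
    _ = h ⬝ᵥ d + Fintype.card ι * k := by
      simp only [Finset.sum_add_distrib, Finset.sum_const, Finset.card_univ, nsmul_eq_mul]
      rfl

theorem floor_mul_dotProduct_sub_le {γ k : 𝕜} (hγ : 0 ≤ γ) {c x v : ι → 𝕜}
    (hopt : c ⬝ᵥ x ≤ c ⬝ᵥ v) (hd : ∀ j, |x j - v j| ≤ k) :
    (fun j => (⌊γ * c j⌋ : 𝕜)) ⬝ᵥ (x - v) ≤ Fintype.card ι * k := by
  have hscaled : (γ • c) ⬝ᵥ (x - v) ≤ 0 := by
    rw [smul_dotProduct, dotProduct_sub, smul_eq_mul]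
    exact mul_nonpos_of_nonneg_of_nonpos hγ (sub_nonpos.2 hopt)
  have hround := floor_dotProduct_le (γ • c) (x - v) hd
  simp only [Pi.smul_apply, smul_eq_mul] at hround
  linarith

end

theorem optimal_face_constraints_active_general
    (n m k α : ℕ)
    (A : Matrix (Fin m) (Fin n) ℤ) (b : Fin m → ℤ)
    (E : Set (Fin m))
    (F : Set (Fin n → ℝ))
    (hF : F = {x : Fin n → ℝ |
      (∀ i ∈ E, ∑ j, (A i j : ℝ) * x j = (b i : ℝ)) ∧
      (∀ i ∉ E, ∑ j, (A i j : ℝ) * x j ≤ (b i : ℝ))})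
    (hFbox : ∀ x ∈ F, ∀ j, 0 ≤ x j ∧ x j ≤ (k : ℝ))
    (hFlattice : F = convexHull ℝ {x ∈ F | ∀ j, ∃ z : ℤ, x j = (z : ℝ)})
    (cb : Fin n → ℝ)
    (Cinf : ℝ) (hCinf : IsGreatest ((fun j => |cb j|) '' Set.univ) Cinf)
    (ch : Fin n → ℝ) (hch : ch = fun j => ((n : ℝ) ^ 3 * k * α / Cinf) * cb j)
    (ct : Fin n → ℤ) (hct : ∀ j, ct j = ⌊ch j⌋)
    (xt : Fin n → ℝ) (hxt : xt ∈ F)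
    (y : Fin m → ℝ)
    (hdual : ∀ j, ∑ i, (A i j : ℝ) * y i = (ct j : ℝ))
    (hynn : ∀ i ∉ E, 0 ≤ y i)
    (hstrong : ∑ i, (b i : ℝ) * y i = ∑ j, (ct j : ℝ) * xt j) :
    ∀ xh ∈ F, (∀ x ∈ F, ∑ j, cb j * x j ≤ ∑ j, cb j * xh j) →
      ∀ i, (n : ℝ) * k < y i → ∑ j, (A i j : ℝ) * xh j = (b i : ℝ) := by
  intro xh hxh hxhopt i hyi
  have hγ : 0 ≤ (n : ℝ) ^ 3 * k * α / Cinf := by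
    obtain ⟨⟨j, -, rfl⟩, -⟩ := hCinf
    positivity
  have hct_floor : (fun j => (ct j : ℝ)) = fun j => (⌊(n : ℝ) ^ 3 * k * α / Cinf * cb j⌋ : ℝ) :=
    funext fun j => by rw [hct, hch]
  refine dotProduct_eq_of_mem_convexHull (hFlattice ▸ hxh) (fun x hx => hxhopt x hx.1) ?_
  rintro v ⟨hvF, hvint⟩ hvopt
  choose z hz using hvint
  obtain rfl : v = Int.cast ∘ z := funext hz
  have hvP : Int.cast ∘ z ∈ polyhedronFace (A.map Int.cast) (Int.cast ∘ b : _ → ℝ) E := by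
    rw [hF] at hvF
    exact hvF
  refine intCast_mulVec_apply_eq_of_mul_slack_le hvP hynn ?_ hyi
  calc _ ≤ _ := mul_slack_le_dual_gap (funext hdual) hynn hvP i
    _ = (fun j => (ct j : ℝ)) ⬝ᵥ (xt - Int.cast ∘ z) := by
      rw [dotProduct_sub]
      exact congrArg (· - _) hstrong
    _ ≤ n * k := by
      rw [hct_floor]
      simpa using floor_mul_dotProduct_sub_le hγ ((hxhopt xt hxt).trans hvopt) fun j =>
        abs_sub_le_of_nonneg_of_le (hFbox xt hxt j).1 (hFbox xt hxt j).2
          (hFbox _ hvF j).1 (hFbox _ hvF j).2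

theorem optimal_face_constraints_active
    (n m k α : ℕ) (hn : 1 ≤ n) (hk : 1 ≤ k) (hα : 1 ≤ α)
    (A : Matrix (Fin m) (Fin n) ℤ) (b : Fin m → ℤ)
    (hαmax : α = Finset.univ.sup fun i => Finset.univ.sup fun j => (A i j).natAbs)
    (E : Set (Fin m))
    (F : Set (Fin n → ℝ))
    (hF : F = {x : Fin n → ℝ |
      (∀ i ∈ E, ∑ j, (A i j : ℝ) * x j = (b i : ℝ)) ∧
      (∀ i ∉ E, ∑ j, (A i j : ℝ) * x j ≤ (b i : ℝ))})
    (hFbox : ∀ x ∈ F, ∀ j, 0 ≤ x j ∧ x j ≤ (k : ℝ))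
    (hFne : F.Nonempty)
    (hFlattice : F = convexHull ℝ {x ∈ F | ∀ j, ∃ z : ℤ, x j = (z : ℝ)})
    (cb : Fin n → ℝ) (hcb : cb ≠ 0)
    (horth : ∀ i ∈ E, ∑ j, (A i j : ℝ) * cb j = 0)
    (Cinf : ℝ) (hCinf : IsGreatest ((fun j => |cb j|) '' Set.univ) Cinf)
    (ch : Fin n → ℝ) (hch : ch = fun j => ((n : ℝ) ^ 3 * k * α / Cinf) * cb j)
    (ct : Fin n → ℤ) (hct : ∀ j, ct j = ⌊ch j⌋)
    (xt : Fin n → ℝ) (hxt : xt ∈ F)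
    (hxtopt : ∀ x ∈ F, ∑ j, (ct j : ℝ) * x j ≤ ∑ j, (ct j : ℝ) * xt j)
    (y : Fin m → ℝ)
    (hdual : ∀ j, ∑ i, (A i j : ℝ) * y i = (ct j : ℝ))
    (hynn : ∀ i ∉ E, 0 ≤ y i)
    (hstrong : ∑ i, (b i : ℝ) * y i = ∑ j, (ct j : ℝ) * xt j) :
    ∀ xh ∈ F, (∀ x ∈ F, ∑ j, cb j * x j ≤ ∑ j, cb j * xh j) →
      ∀ i, (n : ℝ) * k < y i → ∑ j, (A i j : ℝ) * xh j = (b i : ℝ) :=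
  optimal_face_constraints_active_general n m k α A b E F hF hFbox hFlattice cb Cinf hCinf ch hch ct
    hct xt hxt y hdual hynn hstrong
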